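/- Let ρ be a congruence on the monoid M presented by ⟨x, y, e | e³ = e, xey = y, xe²y = x, xy = 1⟩. If there exists u ∈ M with u ρ (u·y), then ρ is the universal congruence M × M. -/
import Mathlib


/-- The alphabet `A = {x, y, e}`. -/
inductive Alpha : Type
  | x | y | e
  deriving DecidableEq

/-- The defining relations `e³ = e`, `xey = y`, `xe²y = x`, `xy = 1`. -/
def rel : FreeMonoid Alpha → FreeMonoid Alpha → Prop := fun a b =>
  (a = .of .e * .of .e * .of .e ∧ b = .of .e) ∨
  (a = .of .x * .of .e * .of .y ∧ b = .of .y) ∨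
  (a = .of .x * .of .e * .of .e * .of .y ∧ b = .of .x) ∨
  (a = .of .x * .of .y ∧ b = 1)

/-- The monoid `M = ⟨x, y, e | e³ = e, xey = y, xe²y = x, xy = 1⟩`. -/
abbrev M := PresentedMonoid rel

/-- The image of `x` in `M`. -/
def X : M := PresentedMonoid.of rel .x
/-- The image of `y` in `M`. -/
def Y : M := PresentedMonoid.of rel .y
/-- The image of `e` in `M`. -/
def E : M := PresentedMonoid.of rel .e

lemma mk_rel {a b : FreeMonoid Alpha} (h : rel a b) :
    PresentedMonoid.mk rel a = PresentedMonoid.mk rel b :=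
  Quotient.sound (ConGen.Rel.of a b h)

lemma rXY : X * Y = 1 := by
  have : PresentedMonoid.mk rel (.of .x * .of .y) = PresentedMonoid.mk rel 1 :=
    mk_rel (Or.inr (Or.inr (Or.inr ⟨rfl, rfl⟩)))
  simpa [X, Y, PresentedMonoid.of, map_mul] using this

lemma rXEY : X * E * Y = Y := by
  have : PresentedMonoid.mk rel (.of .x * .of .e * .of .y) = PresentedMonoid.mk rel (.of .y) :=
    mk_rel (Or.inr (Or.inl ⟨rfl, rfl⟩))
  simpa [X, Y, E, PresentedMonoid.of, map_mul] using this

lemma rXEEY : X * E * E * Y = X := by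
  have : PresentedMonoid.mk rel (.of .x * .of .e * .of .e * .of .y) = PresentedMonoid.mk rel (.of .x) :=
    mk_rel (Or.inr (Or.inr (Or.inl ⟨rfl, rfl⟩)))
  simpa [X, Y, E, PresentedMonoid.of, map_mul] using this

lemma rEEE : E * E * E = E := by
  have : PresentedMonoid.mk rel (.of .e * .of .e * .of .e) = PresentedMonoid.mk rel (.of .e) :=
    mk_rel (Or.inl ⟨rfl, rfl⟩)
  simpa [E, PresentedMonoid.of, map_mul] using this

/-- left-context versions -/
lemma rXY' (z : M) : X * (Y * z) = z := by rw [← mul_assoc, rXY, one_mul]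
lemma rXEY' (z : M) : X * (E * (Y * z)) = Y * z := by
  rw [← mul_assoc, ← mul_assoc, rXEY]
lemma rXEEY' (z : M) : X * (E * (E * (Y * z))) = X * z := by
  rw [← mul_assoc, ← mul_assoc, ← mul_assoc, rXEEY]
lemma rEEE' (z : M) : E * (E * (E * z)) = E * z := by
  rw [← mul_assoc, ← mul_assoc, rEEE]

/-- word to monoid -/
def w2m : List Alpha → M
  | [] => 1
  | a :: l => PresentedMonoid.of rel a * w2m l

lemma w2m_nil : w2m [] = 1 := rfl
lemma w2m_cons (a : Alpha) (l : List Alpha) : w2m (a :: l) = PresentedMonoid.of rel a * w2m l := rfl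

lemma mk_eq_w2m (l : List Alpha) :
    PresentedMonoid.mk rel (FreeMonoid.ofList l) = w2m l := by
  induction l with
  | nil => rfl
  | cons b l ih =>
    rw [FreeMonoid.ofList_cons, map_mul, w2m_cons, ih]
    rfl

lemma exists_word (u : M) : ∃ l : List Alpha, u = w2m l := by
  induction u using PresentedMonoid.inductionOn with
  | h a => exact ⟨FreeMonoid.toList a, by rw [← mk_eq_w2m, FreeMonoid.ofList_toList]⟩

lemma ofx : PresentedMonoid.of rel Alpha.x = X := rfl
lemma ofy : PresentedMonoid.of rel Alpha.y = Y := rfl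
lemma ofe : PresentedMonoid.of rel Alpha.e = E := rfl

lemma pad {u : M} {m k : ℕ} (h : X ^ m * u * Y ^ k = 1) :
    X ^ (m + 1) * u * Y ^ (k + 1) = 1 := by
  have e1 : X ^ (m+1) * u * Y ^ (k+1) = X * (X ^ m * u * Y ^ k) * Y := by
    rw [pow_succ' X m, pow_succ Y k]
    simp only [mul_assoc]
  rw [e1, h, mul_one, rXY]

/-- Phase A': multiplying an x-free word on the left by X, we can absorb it using
enough Y's on the right, staying x-free. -/
lemma xReduce : ∀ (n : ℕ) (v : List Alpha), v.length ≤ n → Alpha.x ∉ v →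
    ∃ t v₂, Alpha.x ∉ v₂ ∧ X * w2m v * Y ^ t = w2m v₂ := by
  intro n
  induction n with
  | zero =>
    intro v hl _
    rw [List.length_eq_zero_iff.mp (Nat.le_zero.mp hl)]
    exact ⟨1, [], by simp, by simp [w2m, pow_one, rXY]⟩
  | succ n ih =>
    intro v hl hx
    match v with
    | [] =>
      exact ⟨1, [], by simp, by simp [w2m, pow_one, rXY]⟩
    | .x :: v => simp at hx
    | .y :: v =>
      refine ⟨0, v, by simpa using hx, ?_⟩
      simp only [w2m_cons, ofy]
      rw [pow_zero, mul_one, rXY']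
    | [.e] =>
      refine ⟨1, [.y], by simp, ?_⟩
      simp only [w2m_cons, w2m_nil, ofe, ofy, mul_one, pow_one]
      rw [rXEY]
    | .e :: .x :: v => simp at hx
    | .e :: .y :: v =>
      refine ⟨0, .y :: v, by simpa using hx, ?_⟩
      simp only [w2m_cons, ofe, ofy, pow_zero, mul_one]
      rw [rXEY']
    | [.e, .e] =>
      refine ⟨2, [], by simp, ?_⟩
      simp only [w2m_cons, w2m_nil, ofe, mul_one]
      rw [sq, ← mul_assoc X E E, ← mul_assoc, rXEEY, rXY]
    | .e :: .e :: .x :: v => simp at hx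
    | .e :: .e :: .y :: v =>
      obtain ⟨t, v₂, h₂, heq⟩ := ih v (by simp at hl ⊢; omega) (by simpa using hx)
      refine ⟨t, v₂, h₂, ?_⟩
      simp only [w2m_cons, ofe, ofy]
      rw [rXEEY']
      exact heq
    | .e :: .e :: .e :: v =>
      obtain ⟨t, v₂, h₂, heq⟩ := ih (.e :: v) (by simp at hl ⊢; omega) (by simpa using hx)
      refine ⟨t, v₂, h₂, ?_⟩
      simp only [w2m_cons, ofe]
      rw [rEEE']
      simp only [w2m_cons, ofe] at heq
      exact heq

/-- Phase B: an x-free word can be killed entirely. -/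
lemma killNoX : ∀ (n : ℕ) (v : List Alpha), v.length ≤ n → Alpha.x ∉ v →
    ∃ m k, X ^ m * w2m v * Y ^ k = 1 := by
  intro n
  induction n with
  | zero =>
    intro v hl _
    rw [List.length_eq_zero_iff.mp (Nat.le_zero.mp hl)]
    exact ⟨0, 0, by simp [w2m]⟩
  | succ n ih =>
    intro v hl hx
    match v with
    | [] => exact ⟨0, 0, by simp [w2m]⟩
    | .x :: v => simp at hx
    | .y :: v =>
      obtain ⟨m, k, h⟩ := ih v (by simp at hl ⊢; omega) (by simpa using hx)
      refine ⟨m + 1, k, ?_⟩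
      simp only [w2m_cons, ofy]
      rw [pow_succ, mul_assoc (X ^ m) X, rXY']
      exact h
    | [.e] =>
      refine ⟨2, 1, ?_⟩
      simp only [w2m_cons, w2m_nil, ofe, mul_one, pow_one]
      rw [sq, mul_assoc X X E, mul_assoc X (X * E) Y, rXEY, rXY]
    | .e :: .x :: v => simp at hx
    | .e :: .y :: v =>
      obtain ⟨m, k, h⟩ := ih (.y :: v) (by simp at hl ⊢; omega) (by simpa using hx)
      refine ⟨m + 1, k, ?_⟩
      simp only [w2m_cons, ofe, ofy]
      rw [pow_succ, mul_assoc (X ^ m) X, rXEY']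
      simp only [w2m_cons, ofy] at h
      exact h
    | [.e, .e] =>
      refine ⟨1, 2, ?_⟩
      simp only [w2m_cons, w2m_nil, ofe, mul_one, pow_one]
      rw [sq, ← mul_assoc X E E, ← mul_assoc, rXEEY, rXY]
    | .e :: .e :: .x :: v => simp at hx
    | .e :: .e :: .y :: v =>
      obtain ⟨m, k, h⟩ := ih v (by simp at hl ⊢; omega) (by simpa using hx)
      have h' := pad h
      refine ⟨m + 1, k + 1, ?_⟩
      simp only [w2m_cons, ofe, ofy]
      rw [pow_succ, mul_assoc (X ^ m) X, rXEEY', ← mul_assoc, ← pow_succ]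
      exact h'
    | .e :: .e :: .e :: v =>
      obtain ⟨m, k, h⟩ := ih (.e :: v) (by simp at hl ⊢; omega) (by simpa using hx)
      refine ⟨m, k, ?_⟩
      simp only [w2m_cons, ofe]
      rw [rEEE']
      simp only [w2m_cons, ofe] at h
      exact h

/-- Phase A: any word times enough Y's equals an x-free word. -/
lemma toNoX : ∀ l : List Alpha, ∃ k v, Alpha.x ∉ v ∧ w2m l * Y ^ k = w2m v := by
  intro l
  induction l with
  | nil => exact ⟨0, [], by simp, by simp [w2m]⟩
  | cons a l ih =>
    obtain ⟨k, v, hv, hev⟩ := ih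
    cases a with
    | x =>
      obtain ⟨t, v₂, h₂, he₂⟩ := xReduce v.length v le_rfl hv
      refine ⟨k + t, v₂, h₂, ?_⟩
      simp only [w2m_cons, ofx]
      rw [pow_add, ← mul_assoc, mul_assoc X (w2m l) (Y ^ k), hev]
      exact he₂
    | y =>
      refine ⟨k, .y :: v, by simpa using hv, ?_⟩
      simp only [w2m_cons, ofy]
      rw [mul_assoc, hev]
    | e =>
      refine ⟨k, .e :: v, by simpa using hv, ?_⟩
      simp only [w2m_cons, ofe]
      rw [mul_assoc, hev]

lemma main_lemma (u : M) : ∃ m k, X ^ m * u * Y ^ k = 1 := by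
  obtain ⟨l, rfl⟩ := exists_word u
  obtain ⟨k, v, hv, hev⟩ := toNoX l
  obtain ⟨m, j, h⟩ := killNoX v.length v le_rfl hv
  refine ⟨m, k + j, ?_⟩
  rw [pow_add, ← mul_assoc, mul_assoc (X ^ m) (w2m l) (Y ^ k), hev]
  exact h

/-- If some `u ∈ M` satisfies `u ρ u·y`, then `ρ` is universal. -/
theorem stmt_19 : ∀ ρ : Con M, (∃ u : M, ρ u (u * Y)) → ρ = ⊤ := by
  rintro ρ ⟨u, hu⟩
  obtain ⟨m, k, h1⟩ := main_lemma u
  have h2 : X ^ m * (u * Y) * Y ^ k = Y := by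
    have e1 : X ^ m * (u * Y) * Y ^ k = X ^ m * u * Y ^ k * Y := by
      calc X ^ m * (u * Y) * Y ^ k = X ^ m * u * (Y * Y ^ k) := by simp only [mul_assoc]
        _ = X ^ m * u * Y ^ (k + 1) := by rw [← pow_succ']
        _ = X ^ m * u * Y ^ k * Y := by rw [pow_succ, ← mul_assoc]
    rw [e1, h1, one_mul]
  have h1Y : ρ 1 Y := by
    have h3 := ρ.mul (ρ.mul (ρ.refl (X ^ m)) hu) (ρ.refl (Y ^ k))
    rwa [h1, h2] at h3
  have hX1 : ρ X 1 := by
    have h3 := ρ.mul (ρ.refl X) h1Y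
    rwa [mul_one, rXY] at h3
  have hY1 : ρ Y 1 := ρ.symm h1Y
  have hE1 : ρ E 1 := by
    have h3 := ρ.mul (ρ.mul (ρ.symm hX1) (ρ.refl E)) h1Y
    rw [one_mul, mul_one, rXEY] at h3
    exact ρ.trans h3 hY1
  have hall : ∀ w : M, ρ w 1 := by
    intro w
    obtain ⟨l, rfl⟩ := exists_word w
    induction l with
    | nil => exact ρ.refl 1
    | cons a l ih =>
      have ha : ρ (PresentedMonoid.of rel a) 1 := by
        cases a
        exacts [hX1, hY1, hE1]
      have h3 := ρ.mul ha ih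
      rw [one_mul] at h3
      rw [w2m_cons]
      exact h3
  rw [eq_top_iff, Con.le_def]
  intro a b _
  exact ρ.trans (hall a) (ρ.symm (hall b))
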